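/- In the box product topology on Π_{ι<κ}[0,1], for every dense open set G and every nonempty open box B = Π_{ι<κ} B_ι (each B_ι a nonempty open subinterval of [0,1]) and every n < ω, there exists an open box A = Π_{ι<κ} A_ι such that: each A_ι is of the form I_ρ for some finite sequence ρ of length > n (where {I_ρ} is a fixed dyadic-style family of nested rational intervals whose diameters tend to 0 with length(ρ)), the closure of A_ι is contained in B_ι for each ι, and A ⊆ G. -/

import Mathlib

/-!
Two consequences of the axioms on the intervals `I ρ` suffice. Along admissible indices (the
`k`-th entry below `2 ^ 2 ^ k`) every child has at most half the length of its parent, being one of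
at least two disjoint children of equal length; so depth-`m` intervals have length at most
`2⁻ᵐ`. And since a parent is covered by its admissible children up to a finite set, an open set
met by an admissible interval is met by one of its admissible children. Descending from `I [] =
(0,1)` towards any point of `[0,1]` therefore yields arbitrarily deep, arbitrarily short intervals
whose closures lie in a prescribed neighbourhood of that point. In the box topology a dense open
`G` contains a box around some point of `B`, and such intervals are chosen coordinatewise.
-/

open Set MeasureTheory TopologicalSpace

/-- The box product topology on `Π (ι) [0,1]`: generated by products of open sets. -/
def boxTopology (ι : Type*) : TopologicalSpace (ι → Set.Icc (0:ℝ) 1) :=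
  TopologicalSpace.generateFrom
    {S | ∃ U : ι → Set (Set.Icc (0:ℝ) 1), (∀ i, IsOpen (U i)) ∧ S = Set.pi Set.univ U}

theorem isTopologicalBasis_boxTopology (ι : Type*) :
    @IsTopologicalBasis _ (boxTopology ι)
      {S | ∃ U : ι → Set (Icc (0:ℝ) 1), (∀ i, IsOpen (U i)) ∧ S = pi univ U} := by
  refine @IsTopologicalBasis.mk _ (boxTopology ι) _ ?_ ?_ rfl
  · rintro _ ⟨U, hU, rfl⟩ _ ⟨V, hV, rfl⟩ x hx
    exact ⟨_, ⟨fun i => U i ∩ V i, fun i => (hU i).inter (hV i), rfl⟩,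
      by simpa only [pi_inter_distrib] using hx, (pi_inter_distrib).subset⟩
  · exact sUnion_eq_univ_iff.2 fun x =>
      ⟨univ, ⟨fun _ => univ, fun _ => isOpen_univ, pi_univ _ |>.symm⟩, mem_univ x⟩

inductive Admissible : List ℕ → Prop
  | nil : Admissible []
  | snoc {ρ : List ℕ} {k : ℕ} : Admissible ρ → k < 2 ^ 2 ^ ρ.length → Admissible (ρ ++ [k])

section IntervalFamily

variable {I : List ℕ → Set ℝ}

theorem two_mul_volume_child_le
    (hnest : ∀ (ρ : List ℕ) (k : ℕ), I (ρ ++ [k]) ⊆ I ρ)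
    (hdisj : ∀ ρ : List ℕ, ∀ k < 2 ^ 2 ^ ρ.length, ∀ l < 2 ^ 2 ^ ρ.length, k ≠ l →
      Disjoint (I (ρ ++ [k])) (I (ρ ++ [l])))
    (heq : ∀ ρ : List ℕ, ∃ len : ℝ, ∀ k < 2 ^ 2 ^ ρ.length,
      ∃ a : ℝ, I (ρ ++ [k]) = Ioo a (a + len))
    {ρ : List ℕ} {k : ℕ} (hk : k < 2 ^ 2 ^ ρ.length) :
    2 * volume (I (ρ ++ [k])) ≤ volume (I ρ) := by
  have h1 : 1 < 2 ^ 2 ^ ρ.length := Nat.one_lt_two_pow (by positivity)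
  obtain ⟨len, hlen⟩ := heq ρ
  have hvol : ∀ l < 2 ^ 2 ^ ρ.length, volume (I (ρ ++ [l])) = ENNReal.ofReal len := by
    intro l hl
    obtain ⟨a, ha⟩ := hlen l hl
    simp [ha]
  obtain ⟨a₁, ha₁⟩ := hlen 1 h1
  calc 2 * volume (I (ρ ++ [k]))
      = volume (I (ρ ++ [0])) + volume (I (ρ ++ [1])) := by
        rw [two_mul, hvol k hk, hvol 0 (by omega), hvol 1 h1]
    _ = volume (I (ρ ++ [0]) ∪ I (ρ ++ [1])) :=
        (measure_union (hdisj ρ 0 (by omega) 1 h1 zero_ne_one)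
          (ha₁ ▸ measurableSet_Ioo)).symm
    _ ≤ volume (I ρ) := measure_mono (union_subset (hnest ρ 0) (hnest ρ 1))

theorem two_pow_length_mul_volume_le_one (h0 : I [] = Ioo 0 1)
    (hnest : ∀ (ρ : List ℕ) (k : ℕ), I (ρ ++ [k]) ⊆ I ρ)
    (hdisj : ∀ ρ : List ℕ, ∀ k < 2 ^ 2 ^ ρ.length, ∀ l < 2 ^ 2 ^ ρ.length, k ≠ l →
      Disjoint (I (ρ ++ [k])) (I (ρ ++ [l])))
    (heq : ∀ ρ : List ℕ, ∃ len : ℝ, ∀ k < 2 ^ 2 ^ ρ.length,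
      ∃ a : ℝ, I (ρ ++ [k]) = Ioo a (a + len))
    {ρ : List ℕ} (hρ : Admissible ρ) :
    2 ^ ρ.length * volume (I ρ) ≤ 1 := by
  induction hρ with
  | nil => simp [h0]
  | @snoc ρ k _ hk ih =>
    calc 2 ^ (ρ ++ [k]).length * volume (I (ρ ++ [k]))
        = 2 ^ ρ.length * (2 * volume (I (ρ ++ [k]))) := by
          rw [List.length_append, List.length_singleton, pow_succ, mul_assoc]
      _ ≤ 2 ^ ρ.length * volume (I ρ) := by
          gcongr; exact two_mul_volume_child_le hnest hdisj heq hk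
      _ ≤ 1 := ih

theorem exists_admissible_inter_nonempty
    (hopen : ∀ ρ, IsOpen (I ρ))
    (hfin : ∀ ρ : List ℕ,
      (I ρ \ ⋃ k ∈ Finset.range (2 ^ 2 ^ ρ.length), I (ρ ++ [k])).Finite)
    {U : Set ℝ} (hU : IsOpen U) (hne : (I [] ∩ U).Nonempty) (m : ℕ) :
    ∃ σ, Admissible σ ∧ σ.length = m ∧ (I σ ∩ U).Nonempty := by
  induction m with
  | zero => exact ⟨[], .nil, rfl, hne⟩
  | succ m ih =>
    obtain ⟨σ, hσ, rfl, y, hy⟩ := ih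
    -- a nonempty open subset of `ℝ` is infinite, so it is not swallowed by the finite remainder
    obtain ⟨z, hzU, hz⟩ := ((infinite_of_mem_nhds y (((hopen σ).inter hU).mem_nhds hy)).sdiff
      (hfin σ)).nonempty
    have hz' : z ∈ ⋃ k ∈ Finset.range (2 ^ 2 ^ σ.length), I (σ ++ [k]) :=
      by_contra fun h => hz ⟨hzU.1, h⟩
    simp only [mem_iUnion, Finset.mem_range, exists_prop] at hz'
    obtain ⟨k, hk, hzk⟩ := hz'
    exact ⟨σ ++ [k], hσ.snoc hk, by simp, z, hzk, hzU.2⟩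

theorem exists_closure_subset_of_mem (h0 : I [] = Ioo 0 1)
    (hIoo : ∀ ρ, ∃ a b : ℝ, a < b ∧ I ρ = Ioo a b)
    (hnest : ∀ (ρ : List ℕ) (k : ℕ), I (ρ ++ [k]) ⊆ I ρ)
    (hdisj : ∀ ρ : List ℕ, ∀ k < 2 ^ 2 ^ ρ.length, ∀ l < 2 ^ 2 ^ ρ.length, k ≠ l →
      Disjoint (I (ρ ++ [k])) (I (ρ ++ [l])))
    (heq : ∀ ρ : List ℕ, ∃ len : ℝ, ∀ k < 2 ^ 2 ^ ρ.length,
      ∃ a : ℝ, I (ρ ++ [k]) = Ioo a (a + len))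
    (hfin : ∀ ρ : List ℕ,
      (I ρ \ ⋃ k ∈ Finset.range (2 ^ 2 ^ ρ.length), I (ρ ++ [k])).Finite)
    {V : Set ℝ} (hV : IsOpen V) {y : ℝ} (hy : y ∈ Icc 0 1) (hyV : y ∈ V) (n : ℕ) :
    ∃ ρ : List ℕ, n < ρ.length ∧ closure (I ρ) ⊆ V := by
  obtain ⟨ε, hε, hball⟩ := Metric.isOpen_iff.1 hV y hyV
  obtain ⟨m, hm⟩ := pow_unbounded_of_one_lt (2 / ε) one_lt_two
  have hne : (I [] ∩ Metric.ball y (ε / 2)).Nonempty := by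
    rw [← closure_Ioo zero_ne_one] at hy
    obtain ⟨z, hz, hyz⟩ := Metric.mem_closure_iff.1 hy (ε / 2) (half_pos hε)
    exact ⟨z, h0 ▸ hz, Metric.mem_ball'.2 hyz⟩
  have hopen : ∀ ρ, IsOpen (I ρ) := fun ρ => by
    obtain ⟨a, b, -, hI⟩ := hIoo ρ
    exact hI ▸ isOpen_Ioo
  obtain ⟨σ, hσ, hlen, z, hzσ, hzy⟩ :=
    exists_admissible_inter_nonempty hopen hfin Metric.isOpen_ball hne (max m (n + 1))
  obtain ⟨a, b, hab, hIσ⟩ := hIoo σ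
  have hvol := two_pow_length_mul_volume_le_one h0 hnest hdisj heq hσ
  rw [hIσ, Real.volume_Ioo, hlen, ← ENNReal.ofReal_ofNat 2, ← ENNReal.ofReal_pow zero_le_two,
    ← ENNReal.ofReal_mul (by positivity), ENNReal.ofReal_le_one] at hvol
  have hshort : b - a < ε / 2 := by
    have : (2 : ℝ) ^ m ≤ 2 ^ max m (n + 1) := pow_le_pow_right₀ one_le_two (le_max_left _ _)
    rw [div_lt_iff₀ hε] at hm
    nlinarith [mul_le_mul_of_nonneg_right this hε.le]
  refine ⟨σ, by omega, fun w hw => hball ?_⟩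
  rw [hIσ, closure_Ioo hab.ne] at hw
  rw [hIσ] at hzσ
  calc dist w y ≤ dist w z + dist z y := dist_triangle w z y
    _ < ε / 2 + ε / 2 := add_lt_add_of_le_of_lt
        ((Real.dist_le_of_mem_Icc hw (Ioo_subset_Icc_self hzσ)).trans hshort.le) hzy
    _ = ε := add_halves ε

end IntervalFamily

/-- Given the canonical family `I ρ` of nested rational-style intervals, a dense open
set `G` in the box topology, a nonempty open box `B`, and `n < ω`, there is an open
box whose sides are intervals `I ρ` with `length ρ > n`, with closures inside the
sides of `B`, and which is contained in `G`. -/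
theorem stmt9 {ι : Type} (I : List ℕ → Set ℝ)
    (h0 : I [] = Set.Ioo 0 1)
    (hint : ∀ ρ, ∃ a b : ℝ, a < b ∧ I ρ = Set.Ioo a b ∧ I ρ ⊆ Set.Ioo 0 1)
    (hnest : ∀ (ρ : List ℕ) (k : ℕ), I (ρ ++ [k]) ⊆ I ρ)
    (hdisj : ∀ ρ : List ℕ, ∀ k < 2 ^ 2 ^ ρ.length, ∀ l < 2 ^ 2 ^ ρ.length, k ≠ l →
      Disjoint (I (ρ ++ [k])) (I (ρ ++ [l])))
    (heq : ∀ ρ : List ℕ, ∃ len : ℝ, ∀ k < 2 ^ 2 ^ ρ.length,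
      ∃ a : ℝ, I (ρ ++ [k]) = Set.Ioo a (a + len))
    (hfin : ∀ ρ : List ℕ,
      (I ρ \ ⋃ k ∈ Finset.range (2 ^ 2 ^ ρ.length), I (ρ ++ [k])).Finite)
    (G : Set (ι → Set.Icc (0:ℝ) 1))
    (hGo : @IsOpen _ (boxTopology ι) G) (hGd : @Dense _ (boxTopology ι) G)
    (B : ι → Set ℝ)
    (hB : ∀ i, ∃ a b : ℝ, a < b ∧ 0 ≤ a ∧ b ≤ 1 ∧ B i = Set.Ioo a b)
    (n : ℕ) :
    ∃ ρs : ι → List ℕ, (∀ i, n < (ρs i).length) ∧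
      (∀ i, closure (I (ρs i)) ⊆ B i) ∧
      {x : ι → Set.Icc (0:ℝ) 1 | ∀ i, (x i : ℝ) ∈ I (ρs i)} ⊆ G := by
  let := boxTopology ι
  choose a b hab ha hb hBi using hB
  have hBopen : ∀ i, IsOpen (B i) := fun i => hBi i ▸ isOpen_Ioo
  have hboxB : IsOpen (pi univ fun i => ((↑) : Icc (0:ℝ) 1 → ℝ) ⁻¹' B i) :=
    (isTopologicalBasis_boxTopology ι).isOpen
      ⟨_, fun i => (hBopen i).preimage continuous_subtype_val, rfl⟩
  obtain ⟨x, hxB, hxG⟩ := hGd.inter_open_nonempty _ hboxB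
    ⟨fun i => ⟨(a i + b i) / 2, by constructor <;> linarith [hab i, ha i, hb i]⟩,
      fun i _ => by simp only [mem_preimage, hBi i, mem_Ioo]; constructor <;> linarith [hab i]⟩
  obtain ⟨_, ⟨U, hU, rfl⟩, hxU, hUG⟩ :=
    (isTopologicalBasis_boxTopology ι).exists_subset_of_mem_open hxG hGo
  choose W hW hWU using fun i => isOpen_induced_iff.1 (hU i)
  have hIoo : ∀ ρ, ∃ a b : ℝ, a < b ∧ I ρ = Ioo a b := fun ρ => by
    obtain ⟨a, b, hab, hI, -⟩ := hint ρ
    exact ⟨a, b, hab, hI⟩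
  choose ρs hlen hsub using fun i => exists_closure_subset_of_mem h0 hIoo hnest hdisj heq hfin
    ((hBopen i).inter (hW i)) (x i).2 ⟨hxB i trivial,
      ((hWU i).symm ▸ hxU i trivial : x i ∈ ((↑) : Icc (0:ℝ) 1 → ℝ) ⁻¹' W i)⟩ n
  refine ⟨ρs, hlen, fun i => (hsub i).trans inter_subset_left, fun z hz => hUG fun i _ => ?_⟩
  rw [← hWU i]
  exact (subset_closure.trans (hsub i)) (hz i) |>.2
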